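/- arXiv:1603.02652 — 4 statements merged into one kernel-verified Lean document; each statement's English description precedes it below -/
import Mathlib

section
/- Let N and m be positive integers. Equip ℝ^N with the L1 norm ‖x‖₁ = Σ_{i=1}^N |x_i|. Let S : ℕ → (ℝ^N → ℝ^N) be a family of evolution operators each of which is nonexpansive in the L1 norm, i.e. for every n and all u, v ∈ ℝ^N, ‖S n u − S n v‖₁ ≤ ‖u − v‖₁. Let d : ℕ → Fin m → ℝ^N be dictionary trajectories evolved by the scheme, d (n+1) i = S n (d n i), and let u : ℕ → ℝ^N be the exact discrete solution, u (n+1) = S n (u n). Then for every n ∈ ℕ and all convex coefficients λ : Fin m → ℝ with λ i ≥ 0 for all i and Σ_i λ i = 1, one has ‖Σ_i λ i • d n i − u n‖₁ ≤ max_i ‖d 0 i − u 0‖₁. -/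
/-- Convex-hull error estimate for dictionary-based reduced-order solutions:
if each evolution operator `S n` is nonexpansive in the L1 norm, the dictionary
trajectories and the exact solution are evolved by the scheme, then any convex
combination of the dictionary members stays within the largest initial L1 error. -/
theorem l1_convex_hull_error_estimate
    (N m : ℕ) (hN : 0 < N) (hm : 0 < m)
    (S : ℕ → (Fin N → ℝ) → (Fin N → ℝ))
    (hS : ∀ n (u v : Fin N → ℝ),
      ∑ j, |S n u j - S n v j| ≤ ∑ j, |u j - v j|)
    (d : ℕ → Fin m → Fin N → ℝ)
    (hd : ∀ n i, d (n + 1) i = S n (d n i))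
    (u : ℕ → Fin N → ℝ)
    (hu : ∀ n, u (n + 1) = S n (u n)) :
    ∀ (n : ℕ) (lam : Fin m → ℝ), (∀ i, 0 ≤ lam i) → (∑ i, lam i = 1) →
      ∑ j, |(∑ i, lam i • d n i) j - u n j| ≤
        Finset.univ.sup' ⟨⟨0, hm⟩, Finset.mem_univ _⟩
          (fun i => ∑ j, |d 0 i j - u 0 j|) := by
  -- each individual error is nonincreasing
  have key : ∀ (n : ℕ) (i : Fin m),
      ∑ j, |d n i j - u n j| ≤ ∑ j, |d 0 i j - u 0 j| := by
    intro n i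
    induction n with
    | zero => exact le_refl _
    | succ k ih =>
      calc ∑ j, |d (k+1) i j - u (k+1) j|
          = ∑ j, |S k (d k i) j - S k (u k) j| := by rw [hd, hu]
        _ ≤ ∑ j, |d k i j - u k j| := hS k _ _
        _ ≤ _ := ih
  intro n lam hpos hsum
  have step1 : ∑ j, |(∑ i, lam i • d n i) j - u n j|
      ≤ ∑ i, lam i * ∑ j, |d n i j - u n j| := by
    calc ∑ j, |(∑ i, lam i • d n i) j - u n j|
        = ∑ j, |∑ i, lam i * (d n i j - u n j)| := by
          apply Finset.sum_congr rfl
          intro j _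
          congr 1
          have : (∑ i, lam i • d n i) j = ∑ i, lam i * d n i j := by
            simp [Finset.sum_apply]
          rw [this]
          have : ∑ i, lam i * (d n i j - u n j)
              = (∑ i, lam i * d n i j) - (∑ i, lam i) * u n j := by
            rw [Finset.sum_mul]
            rw [← Finset.sum_sub_distrib]
            apply Finset.sum_congr rfl
            intro i _; ring
          rw [this, hsum, one_mul]
      _ ≤ ∑ j, ∑ i, |lam i * (d n i j - u n j)| := by
          apply Finset.sum_le_sum
          intro j _; exact Finset.abs_sum_le_sum_abs _ _
      _ = ∑ i, lam i * ∑ j, |d n i j - u n j| := by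
          rw [Finset.sum_comm]
          apply Finset.sum_congr rfl
          intro i _
          rw [Finset.mul_sum]
          apply Finset.sum_congr rfl
          intro j _
          rw [abs_mul, abs_of_nonneg (hpos i)]
  have step2 : ∑ i, lam i * ∑ j, |d n i j - u n j|
      ≤ Finset.univ.sup' ⟨⟨0, hm⟩, Finset.mem_univ _⟩
          (fun i => ∑ j, |d 0 i j - u 0 j|) := by
    calc ∑ i, lam i * ∑ j, |d n i j - u n j|
        ≤ ∑ i, lam i * (Finset.univ.sup' ⟨⟨0, hm⟩, Finset.mem_univ _⟩
            (fun i => ∑ j, |d 0 i j - u 0 j|)) := by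
          apply Finset.sum_le_sum
          intro i _
          apply mul_le_mul_of_nonneg_left _ (hpos i)
          exact le_trans (key n i)
            (Finset.le_sup' (fun i => ∑ j, |d 0 i j - u 0 j|) (Finset.mem_univ i))
      _ = _ := by rw [← Finset.sum_mul, hsum, one_mul]
  exact le_trans step1 step2
end

section
/- Let N and m be positive integers, ε ≥ 0, and equip ℝ^N with the L1 norm ‖x‖₁ = Σ_{i=1}^N |x_i|. Let S : ℕ → (ℝ^N → ℝ^N) be a family of maps each nonexpansive in the L1 norm. Let d : ℕ → Fin m → ℝ^N be perturbed dictionary trajectories satisfying ‖d (n+1) i − S n (d n i)‖₁ ≤ ε for all n and i, and let u : ℕ → ℝ^N satisfy u (n+1) = S n (u n). Then for every n ∈ ℕ and all convex coefficients λ : Fin m → ℝ with λ i ≥ 0 and Σ_i λ i = 1, one has ‖Σ_i λ i • d n i − u n‖₁ ≤ max_i ‖d 0 i − u 0‖₁ + n·ε. -/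
/-- Perturbed convex-hull error estimate: if the dictionary trajectories follow the
nonexpansive scheme up to an L1 perturbation of size at most `ε` at each step, then
the error of any convex combination grows at most by `n * ε`. -/
theorem l1_convex_hull_error_estimate_perturbed
    (N m : ℕ) (hN : 0 < N) (hm : 0 < m) (ε : ℝ) (hε : 0 ≤ ε)
    (S : ℕ → (Fin N → ℝ) → (Fin N → ℝ))
    (hS : ∀ n (u v : Fin N → ℝ),
      ∑ j, |S n u j - S n v j| ≤ ∑ j, |u j - v j|)
    (d : ℕ → Fin m → Fin N → ℝ)
    (hd : ∀ n i, ∑ j, |d (n + 1) i j - S n (d n i) j| ≤ ε)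
    (u : ℕ → Fin N → ℝ)
    (hu : ∀ n, u (n + 1) = S n (u n)) :
    ∀ (n : ℕ) (lam : Fin m → ℝ), (∀ i, 0 ≤ lam i) → (∑ i, lam i = 1) →
      ∑ j, |(∑ i, lam i • d n i) j - u n j| ≤
        Finset.univ.sup' ⟨⟨0, hm⟩, Finset.mem_univ _⟩
          (fun i => ∑ j, |d 0 i j - u 0 j|) + n * ε := by
  set M := Finset.univ.sup' ⟨⟨0, hm⟩, Finset.mem_univ _⟩
    (fun i => ∑ j, |d 0 i j - u 0 j|) with hM
  -- per-trajectory bound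
  have key : ∀ (n : ℕ) (i : Fin m), ∑ j, |d n i j - u n j| ≤ M + n * ε := by
    intro n
    induction n with
    | zero =>
      intro i
      simp only [Nat.cast_zero, zero_mul, add_zero]
      exact Finset.le_sup' (fun i => ∑ j, |d 0 i j - u 0 j|) (Finset.mem_univ i)
    | succ n ih =>
      intro i
      have h1 : ∑ j, |d (n+1) i j - u (n+1) j| ≤
          (∑ j, |d (n+1) i j - S n (d n i) j|) + ∑ j, |S n (d n i) j - u (n+1) j| := by
        rw [← Finset.sum_add_distrib]
        apply Finset.sum_le_sum
        intro j _
        have := abs_sub_abs_le_abs_sub (d (n+1) i j - u (n+1) j) 0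
        calc |d (n+1) i j - u (n+1) j|
            = |(d (n+1) i j - S n (d n i) j) + (S n (d n i) j - u (n+1) j)| := by ring_nf
          _ ≤ _ := abs_add_le _ _
      have h2 : ∑ j, |S n (d n i) j - u (n+1) j| ≤ ∑ j, |d n i j - u n j| := by
        rw [hu n]; exact hS n _ _
      calc ∑ j, |d (n+1) i j - u (n+1) j| ≤ _ := h1
        _ ≤ ε + (M + n * ε) := add_le_add (hd n i) (h2.trans (ih i))
        _ = M + (n+1 : ℕ) * ε := by push_cast; ring
  intro n lam hlam hsum
  have h1 : ∑ j, |(∑ i, lam i • d n i) j - u n j| ≤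
      ∑ i, lam i * ∑ j, |d n i j - u n j| := by
    have : ∀ j, |(∑ i, lam i • d n i) j - u n j| ≤ ∑ i, lam i * |d n i j - u n j| := by
      intro j
      have : (∑ i, lam i • d n i) j - u n j = ∑ i, lam i * (d n i j - u n j) := by
        simp only [Finset.sum_apply, Pi.smul_apply, smul_eq_mul, Finset.sum_mul,
          mul_sub]
        rw [Finset.sum_sub_distrib, ← Finset.sum_mul, hsum, one_mul]
      rw [this]
      refine (Finset.abs_sum_le_sum_abs _ _).trans ?_
      apply Finset.sum_le_sum
      intro i _
      rw [abs_mul, abs_of_nonneg (hlam i)]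
    calc ∑ j, |(∑ i, lam i • d n i) j - u n j|
        ≤ ∑ j, ∑ i, lam i * |d n i j - u n j| :=
          Finset.sum_le_sum fun j _ => this j
      _ = ∑ i, lam i * ∑ j, |d n i j - u n j| := by
          rw [Finset.sum_comm]; simp [Finset.mul_sum]
  refine h1.trans ?_
  calc ∑ i, lam i * ∑ j, |d n i j - u n j|
      ≤ ∑ i, lam i * (M + n * ε) :=
        Finset.sum_le_sum fun i _ => mul_le_mul_of_nonneg_left (key n i) (hlam i)
    _ = M + n * ε := by rw [← Finset.sum_mul, hsum, one_mul]
end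

section
/- Let I be a nonempty finite index set and let T : (I → ℝ) → (I → ℝ) be a map that (a) is monotone: if u i ≤ v i for all i ∈ I then (T u) i ≤ (T v) i for all i ∈ I, and (b) conserves the sum: Σ_{i ∈ I} (T u) i = Σ_{i ∈ I} u i for all u. Then T is nonexpansive in the L1 norm: for all u, v, Σ_{i ∈ I} |(T u) i − (T v) i| ≤ Σ_{i ∈ I} |u i − v i|. -/
/-- Crandall–Tartar lemma (finite-dimensional version): a monotone map that
conserves the sum is nonexpansive in the L1 norm. -/
theorem crandall_tartar_l1_contraction
    (I : Type*) [Fintype I] [Nonempty I]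
    (T : (I → ℝ) → (I → ℝ))
    (hmono : ∀ u v : I → ℝ, (∀ i, u i ≤ v i) → ∀ i, T u i ≤ T v i)
    (hcons : ∀ u : I → ℝ, ∑ i, T u i = ∑ i, u i) :
    ∀ u v : I → ℝ, ∑ i, |T u i - T v i| ≤ ∑ i, |u i - v i| := by
  intro u v
  set w : I → ℝ := fun i => max (u i) (v i) with hw
  have hTu : ∀ i, T u i ≤ T w i := hmono u w (fun i => le_max_left _ _)
  have hTv : ∀ i, T v i ≤ T w i := hmono v w (fun i => le_max_right _ _)
  have h1 : ∀ i, |T u i - T v i| ≤ (2 * T w i - T u i - T v i) := by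
    intro i
    rw [abs_sub_le_iff]
    constructor <;> nlinarith [hTu i, hTv i]
  calc ∑ i, |T u i - T v i| ≤ ∑ i, (2 * T w i - T u i - T v i) :=
        Finset.sum_le_sum fun i _ => h1 i
    _ = 2 * (∑ i, T w i) - (∑ i, T u i) - (∑ i, T v i) := by
        rw [Finset.sum_sub_distrib, Finset.sum_sub_distrib, Finset.mul_sum]
    _ = 2 * (∑ i, w i) - (∑ i, u i) - (∑ i, v i) := by rw [hcons, hcons, hcons]
    _ = ∑ i, (2 * w i - u i - v i) := by
        rw [Finset.sum_sub_distrib, Finset.sum_sub_distrib, Finset.mul_sum]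
    _ = ∑ i, |u i - v i| := by
        apply Finset.sum_congr rfl
        intro i _
        simp only [hw]
        rcases le_total (u i) (v i) with h | h
        · rw [max_eq_right h, abs_sub_comm, abs_of_nonneg (by linarith)]; ring
        · rw [max_eq_left h, abs_of_nonneg (by linarith)]; ring
end

section
/- Let I be a nonempty finite index set and let T : (I → ℝ) → (I → ℝ) be a map that is monotone (u i ≤ v i for all i implies (T u) i ≤ (T v) i for all i) and conserves the sum (Σ_{i ∈ I} (T u) i = Σ_{i ∈ I} u i for all u). Then for all u, v : I → ℝ, Σ_{i ∈ I} max((T u) i − (T v) i, 0) ≤ Σ_{i ∈ I} max(u i − v i, 0). -/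
/-- Positive-part contraction in the proof of the Crandall–Tartar lemma: a monotone
map that conserves the sum contracts the L1 norm of the positive part of differences. -/
theorem crandall_tartar_posPart_contraction
    (I : Type*) [Fintype I] [Nonempty I]
    (T : (I → ℝ) → (I → ℝ))
    (hmono : ∀ u v : I → ℝ, (∀ i, u i ≤ v i) → ∀ i, T u i ≤ T v i)
    (hcons : ∀ u : I → ℝ, ∑ i, T u i = ∑ i, u i) :
    ∀ u v : I → ℝ, ∑ i, max (T u i - T v i) 0 ≤ ∑ i, max (u i - v i) 0 := by
  intro u v
  set w : I → ℝ := fun i => max (u i) (v i) with hw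
  have h1 : ∀ i, T u i ≤ T w i := hmono u w (fun i => le_max_left _ _)
  have h2 : ∀ i, T v i ≤ T w i := hmono v w (fun i => le_max_right _ _)
  calc ∑ i, max (T u i - T v i) 0
      ≤ ∑ i, (T w i - T v i) := by
        apply Finset.sum_le_sum
        intro i _
        exact max_le (by linarith [h1 i]) (by linarith [h2 i])
    _ = ∑ i, w i - ∑ i, v i := by
        rw [Finset.sum_sub_distrib, hcons, hcons]
    _ = ∑ i, max (u i - v i) 0 := by
        rw [← Finset.sum_sub_distrib]
        congr 1; funext i
        rw [show (0:ℝ) = v i - v i by ring, ← max_sub_sub_right]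
end
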